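/- Let β > 0, L ≥ 1, and P₁, …, P_L > 0. The multilabel micro-F_β-measure mF_β(fn, fp) = (1+β²)·Σ_{k=1}^L (P_k − fn_k) / ( (1+β²)·Σ_{k=1}^L P_k + Σ_{k=1}^L (fp_k − fn_k) ), viewed as a function of (fn, fp) ∈ ℝ^L × ℝ^L ≅ ℝ^{2L}, is pseudo-linear on the open convex half-space {(fn, fp) : (1+β²)Σ_k P_k + Σ_k(fp_k − fn_k) > 0}. -/

import Mathlib

open RealInnerProductSpace

/-- A differentiable function `F` is pseudo-convex on `D` if for all `e, e' ∈ D`,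
`F e > F e'` implies `⟪∇F e, e' - e⟫ < 0`. -/
def PseudoConvexOn {E : Type*} [NormedAddCommGroup E] [InnerProductSpace ℝ E]
    [CompleteSpace E] (D : Set E) (F : E → ℝ) : Prop :=
  ∀ e ∈ D, ∀ e' ∈ D, F e > F e' → ⟪gradient F e, e' - e⟫ < 0

/-- `F` is pseudo-linear on `D` if both `F` and `-F` are pseudo-convex on `D`. -/
def PseudoLinearOn {E : Type*} [NormedAddCommGroup E] [InnerProductSpace ℝ E]
    [CompleteSpace E] (D : Set E) (F : E → ℝ) : Prop :=
  PseudoConvexOn D F ∧ PseudoConvexOn D (fun e => -F e)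

/-!
For a linear-fractional function `F = (a + N) / (b + D)` with `N`, `D` linear, a direct
computation gives `⟪∇F e, e' - e⟫ = (b + D e') / (b + D e) * (F e' - F e)`. On the half-space
`b + D > 0` the factor is positive, so the derivative at `e` towards `e'` has the sign of
`F e' - F e`, which is pseudo-linearity of `F` and `-F` at once. The micro-`F_β`-measure is
linear-fractional in the error profile `(fn, fp)`.
-/

theorem hasFDerivAt_linearFractional {𝕜 E : Type*} [NontriviallyNormedField 𝕜]
    [NormedAddCommGroup E] [NormedSpace 𝕜 E] (N D : E →L[𝕜] 𝕜) (a b : 𝕜) {e : E}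
    (he : b + D e ≠ 0) :
    HasFDerivAt (fun x => (a + N x) / (b + D x))
      ((b + D e)⁻¹ • N - ((a + N e) / (b + D e) ^ 2) • D) e := by
  have hnum : HasFDerivAt (fun x => a + N x) N e := N.hasFDerivAt.const_add a
  have hinv : HasFDerivAt (fun x => (b + D x)⁻¹) (-((b + D e) ^ 2)⁻¹ • D) e :=
    (hasDerivAt_inv he).comp_hasFDerivAt e (D.hasFDerivAt.const_add b)
  simp only [div_eq_mul_inv]
  refine (hnum.fun_mul hinv).congr_fderiv ?_
  ext v
  simp only [add_apply, smul_apply, smul_eq_mul, neg_mul, mul_neg, sub_apply]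
  ring

section LinearFractional

variable {E : Type*} [NormedAddCommGroup E] [InnerProductSpace ℝ E] [CompleteSpace E]

theorem PseudoLinearOn.of_inner_gradient_eq_pos_mul {D : Set E} {F : E → ℝ}
    (h : ∀ e ∈ D, ∀ e' ∈ D, ∃ c > 0, ⟪gradient F e, e' - e⟫ = c * (F e' - F e)) :
    PseudoLinearOn D F := by
  constructor
  · intro e he e' he' hlt
    obtain ⟨c, hc, hinner⟩ := h e he e' he'
    rw [hinner]
    exact mul_neg_of_pos_of_neg hc (sub_neg.mpr hlt)
  · intro e he e' he' hlt
    obtain ⟨c, hc, hinner⟩ := h e he e' he'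
    rw [inner_gradient_left, fderiv_fun_neg, neg_apply, ← inner_gradient_left,
      hinner, neg_lt_zero]
    exact mul_pos hc (by linarith)

theorem inner_gradient_linearFractional (N D : E →L[ℝ] ℝ) (a b : ℝ) {e e' : E}
    (he : b + D e ≠ 0) (he' : b + D e' ≠ 0) :
    ⟪gradient (fun x => (a + N x) / (b + D x)) e, e' - e⟫ =
      (b + D e') / (b + D e) * ((a + N e') / (b + D e') - (a + N e) / (b + D e)) := by
  rw [inner_gradient_left, (hasFDerivAt_linearFractional N D a b he).fderiv]
  simp only [sub_apply, smul_apply, map_sub, smul_eq_mul]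
  field_simp
  ring

theorem pseudoLinearOn_linearFractional (N D : E →L[ℝ] ℝ) (a b : ℝ) :
    PseudoLinearOn {e | 0 < b + D e} (fun x => (a + N x) / (b + D x)) :=
  .of_inner_gradient_eq_pos_mul fun _ he _ he' =>
    ⟨_, div_pos he' he, inner_gradient_linearFractional N D a b he.ne' he'.ne'⟩

end LinearFractional

/-- Coordinates: `e (Sum.inl k) = fnₖ` and `e (Sum.inr k) = fpₖ`. -/
theorem multilabel_micro_Fbeta_pseudoLinear_general (β : ℝ)
    (L : ℕ) (P : Fin L → ℝ) :
    PseudoLinearOn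
      {e : EuclideanSpace ℝ (Fin L ⊕ Fin L) |
        (1 + β ^ 2) * (∑ k, P k) +
          ∑ k : Fin L, (e (Sum.inr k) - e (Sum.inl k)) > 0}
      (fun e =>
        (1 + β ^ 2) * (∑ k : Fin L, (P k - e (Sum.inl k))) /
          ((1 + β ^ 2) * (∑ k, P k) +
            ∑ k : Fin L, (e (Sum.inr k) - e (Sum.inl k)))) := by
  set fn : EuclideanSpace ℝ (Fin L ⊕ Fin L) →L[ℝ] ℝ := ∑ k, EuclideanSpace.proj (Sum.inl k)
  set fp : EuclideanSpace ℝ (Fin L ⊕ Fin L) →L[ℝ] ℝ := ∑ k, EuclideanSpace.proj (Sum.inr k)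
  have hden (e : EuclideanSpace ℝ (Fin L ⊕ Fin L)) :
      ∑ k : Fin L, (e (Sum.inr k) - e (Sum.inl k)) = (fp - fn) e := by
    simp [fn, fp, Finset.sum_sub_distrib]
  have hnum (e : EuclideanSpace ℝ (Fin L ⊕ Fin L)) :
      (1 + β ^ 2) * ∑ k : Fin L, (P k - e (Sum.inl k)) =
        (1 + β ^ 2) * ∑ k, P k + (-(1 + β ^ 2) • fn) e := by
    simp only [Finset.sum_sub_distrib, neg_add_rev, smul_apply, sum_apply, PiLp.proj_apply,
      smul_eq_mul, fn]
    ring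
  simp only [hden, hnum, gt_iff_lt]
  exact pseudoLinearOn_linearFractional _ _ _ _

/-- The multilabel micro-`F_β`-measure, viewed as a function of the error profile
`(fn, fp) ∈ ℝ^L × ℝ^L ≅ ℝ^{2L}` (here `e (Sum.inl k) = fnₖ` and
`e (Sum.inr k) = fpₖ`), is pseudo-linear on the open half-space where its
denominator is positive. -/
theorem multilabel_micro_Fbeta_pseudoLinear (β : ℝ) (hβ : 0 < β)
    (L : ℕ) (hL : 1 ≤ L) (P : Fin L → ℝ) (hP : ∀ k, 0 < P k) :
    PseudoLinearOn
      {e : EuclideanSpace ℝ (Fin L ⊕ Fin L) |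
        (1 + β ^ 2) * (∑ k, P k) +
          ∑ k : Fin L, (e (Sum.inr k) - e (Sum.inl k)) > 0}
      (fun e =>
        (1 + β ^ 2) * (∑ k : Fin L, (P k - e (Sum.inl k))) /
          ((1 + β ^ 2) * (∑ k, P k) +
            ∑ k : Fin L, (e (Sum.inr k) - e (Sum.inl k)))) :=
  multilabel_micro_Fbeta_pseudoLinear_general β L P
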